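/- For s ≥ 2, let T_s ∈ ℝ^{2^s × 2^s} be the tridiagonal matrix with −2 on the main diagonal and 1 on the first sub- and super-diagonals. Then T_s = I₂ ⊗ T_{s−1} + σ₋ ⊗ σ₊^{⊗(s−1)} + σ₊ ⊗ σ₋^{⊗(s−1)}, where σ₊ = E₀₁ and σ₋ = E₁₀ are 2×2 matrix units, ⊗ is the Kronecker product and σ^{⊗(s−1)} the (s−1)-fold Kronecker power; moreover T₁ = −2I₂ + σ₋ + σ₊. -/

import Mathlib

/-- The tridiagonal matrix with `−2` on the diagonal and `1` on the first sub-
and super-diagonals (size `m × m`). -/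
def Tmat (m : ℕ) : Matrix (Fin m) (Fin m) ℝ :=
  Matrix.of fun i j =>
    if (i : ℕ) = (j : ℕ) then -2
    else if (i : ℕ) + 1 = (j : ℕ) ∨ (j : ℕ) + 1 = (i : ℕ) then 1 else 0

/-- `σ₊ = E₀₁`. -/
def sigmaPlus : Matrix (Fin 2) (Fin 2) ℝ := Matrix.single 0 1 1

/-- `σ₋ = E₁₀`. -/
def sigmaMinus : Matrix (Fin 2) (Fin 2) ℝ := Matrix.single 1 0 1

/-- Identification `Fin 2 × Fin 2^k ≃ Fin 2^(k+1)` sending `(a, i)` to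
`a·2^k + i`, i.e. the left factor is the most significant binary digit. -/
def qIdx (k : ℕ) : Fin 2 × Fin (2 ^ k) ≃ Fin (2 ^ (k + 1)) :=
  finProdFinEquiv.trans (finCongr (by ring))

/-- Kronecker product `X ⊗ Y` of a `2×2` matrix with a `2^k × 2^k` matrix,
realized on `Fin 2^(k+1)` with the left factor most significant. -/
noncomputable def qkron {k : ℕ} (X : Matrix (Fin 2) (Fin 2) ℝ)
    (Y : Matrix (Fin (2 ^ k)) (Fin (2 ^ k)) ℝ) :
    Matrix (Fin (2 ^ (k + 1))) (Fin (2 ^ (k + 1))) ℝ :=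
  Matrix.reindex (qIdx k) (qIdx k) (Matrix.kroneckerMap (· * ·) X Y)

/-- `k`-fold Kronecker power of a `2×2` matrix. -/
noncomputable def qkronPow : (k : ℕ) → Matrix (Fin 2) (Fin 2) ℝ → Matrix (Fin (2 ^ k)) (Fin (2 ^ k)) ℝ
  | 0, _ => 1
  | k + 1, X => qkron X (qkronPow k X)

/-! Split an index of `Fin 2^(k+1)` as `(a, i)` with `a` its leading binary digit. The diagonal
blocks of `T_{k+1}` are copies of `T_k`, and the only nonzero entry of the block `(0, 1)` couples
the two middle grid points, i.e. sits at `(2^k - 1, 0)`. By induction `σ₊^{⊗k}` and `σ₋^{⊗k}` are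
the matrix units at the corners `(0, 2^k - 1)` and `(2^k - 1, 0)`; the block `(1, 0)` follows from
the block `(0, 1)` by transposition, since `σ₋ = σ₊ᵀ` and `T` is symmetric. -/

open Matrix

lemma qIdx_val (k : ℕ) (a : Fin 2) (i : Fin (2 ^ k)) :
    (qIdx k (a, i) : ℕ) = i + 2 ^ k * a := by
  simp [qIdx, finProdFinEquiv]

lemma qIdx_val_eq_zero_iff (k : ℕ) (a : Fin 2) (i : Fin (2 ^ k)) :
    (qIdx k (a, i) : ℕ) = 0 ↔ a = 0 ∧ (i : ℕ) = 0 := by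
  rw [qIdx_val, Fin.ext_iff, Fin.val_zero, Nat.add_eq_zero_iff, mul_eq_zero,
    or_iff_right (Nat.two_pow_pos k).ne', and_comm]

lemma qIdx_val_eq_last_iff (k : ℕ) (a : Fin 2) (i : Fin (2 ^ k)) :
    (qIdx k (a, i) : ℕ) = 2 ^ (k + 1) - 1 ↔ a = 1 ∧ (i : ℕ) = 2 ^ k - 1 := by
  have := i.isLt
  rw [qIdx_val, pow_succ]
  fin_cases a <;> simp <;> omega

lemma qkron_apply {k : ℕ} (X : Matrix (Fin 2) (Fin 2) ℝ) (Y : Matrix (Fin (2 ^ k)) (Fin (2 ^ k)) ℝ)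
    (a b : Fin 2) (i j : Fin (2 ^ k)) :
    qkron X Y (qIdx k (a, i)) (qIdx k (b, j)) = X a b * Y i j := by
  simp [qkron]

lemma transpose_qkron {k : ℕ} (X : Matrix (Fin 2) (Fin 2) ℝ)
    (Y : Matrix (Fin (2 ^ k)) (Fin (2 ^ k)) ℝ) : (qkron X Y)ᵀ = qkron Xᵀ Yᵀ := by
  rw [qkron, qkron, transpose_reindex, kroneckerMap_transpose]

lemma transpose_qkronPow (k : ℕ) (X : Matrix (Fin 2) (Fin 2) ℝ) :
    (qkronPow k X)ᵀ = qkronPow k Xᵀ := by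
  induction k with
  | zero => exact transpose_one
  | succ k ih => rw [qkronPow, qkronPow, transpose_qkron, ih]

lemma transpose_sigmaPlus : sigmaPlusᵀ = sigmaMinus :=
  transpose_single 0 1 1

lemma sigmaPlus_apply (a b : Fin 2) : sigmaPlus a b = if a = 0 ∧ b = 1 then 1 else 0 := by
  simp only [sigmaPlus, Matrix.single_apply, eq_comm]

lemma sigmaMinus_apply (a b : Fin 2) : sigmaMinus a b = if a = 1 ∧ b = 0 then 1 else 0 := by
  simp only [sigmaMinus, Matrix.single_apply, eq_comm]

lemma qkronPow_sigmaPlus_apply (k : ℕ) (i j : Fin (2 ^ k)) :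
    qkronPow k sigmaPlus i j = if (i : ℕ) = 0 ∧ (j : ℕ) = 2 ^ k - 1 then 1 else 0 := by
  induction k with
  | zero =>
    obtain rfl : i = j := Subsingleton.elim (α := Fin 1) i j
    simp [qkronPow]
  | succ k ih =>
    obtain ⟨⟨a, i⟩, rfl⟩ := (qIdx k).surjective i
    obtain ⟨⟨b, j⟩, rfl⟩ := (qIdx k).surjective j
    simp only [qkronPow, qkron_apply, sigmaPlus_apply, ih, qIdx_val_eq_zero_iff,
      qIdx_val_eq_last_iff, ite_zero_mul_ite_zero, one_mul]
    exact if_congr (by tauto) rfl rfl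

lemma qkronPow_sigmaMinus_apply (k : ℕ) (i j : Fin (2 ^ k)) :
    qkronPow k sigmaMinus i j = if (i : ℕ) = 2 ^ k - 1 ∧ (j : ℕ) = 0 then 1 else 0 := by
  rw [← transpose_sigmaPlus, ← transpose_qkronPow, transpose_apply, qkronPow_sigmaPlus_apply]
  exact if_congr and_comm rfl rfl

lemma Tmat_apply (m : ℕ) (i j : Fin m) :
    Tmat m i j = if (i : ℕ) = j then -2 else if (i : ℕ) + 1 = j ∨ (j : ℕ) + 1 = i then 1 else 0 :=
  rfl

lemma transpose_Tmat (m : ℕ) : (Tmat m)ᵀ = Tmat m := by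
  ext i j
  simp only [transpose_apply, Tmat_apply, eq_comm (a := (j : ℕ)), or_comm]

lemma Tmat_qIdx_same (k : ℕ) (a : Fin 2) (i j : Fin (2 ^ k)) :
    Tmat (2 ^ (k + 1)) (qIdx k (a, i)) (qIdx k (a, j)) = Tmat (2 ^ k) i j := by
  rw [Tmat_apply, Tmat_apply, qIdx_val, qIdx_val]
  exact if_congr (by omega) rfl (if_congr (by omega) rfl rfl)

lemma Tmat_qIdx_zero_one (k : ℕ) (i j : Fin (2 ^ k)) :
    Tmat (2 ^ (k + 1)) (qIdx k (0, i)) (qIdx k (1, j)) =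
      if (i : ℕ) = 2 ^ k - 1 ∧ (j : ℕ) = 0 then 1 else 0 := by
  have := i.isLt
  rw [Tmat_apply, qIdx_val, qIdx_val]
  simp only [Fin.val_zero, Fin.val_one, mul_zero, add_zero, mul_one]
  rw [if_neg (by omega)]
  exact if_congr (by omega) rfl rfl

lemma Tmat_qIdx_one_zero (k : ℕ) (i j : Fin (2 ^ k)) :
    Tmat (2 ^ (k + 1)) (qIdx k (1, i)) (qIdx k (0, j)) =
      if (i : ℕ) = 0 ∧ (j : ℕ) = 2 ^ k - 1 then 1 else 0 := by
  rw [← transpose_Tmat, transpose_apply, Tmat_qIdx_zero_one]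
  exact if_congr and_comm rfl rfl

/-- **Sigma-basis recursion for the discrete diffusion matrix.**  For `s ≥ 2`
(here `s = k + 2`), the `2^s × 2^s` tridiagonal matrix `T_s` with `−2` on the
diagonal and `1` on the first off-diagonals satisfies
`T_s = I₂ ⊗ T_{s−1} + σ₋ ⊗ σ₊^{⊗(s−1)} + σ₊ ⊗ σ₋^{⊗(s−1)}`;
moreover `T₁ = −2I₂ + σ₋ + σ₊`. -/
theorem tridiagonal_kronecker_recursion :
    (∀ k : ℕ, Tmat (2 ^ (k + 2)) =
        qkron (1 : Matrix (Fin 2) (Fin 2) ℝ) (Tmat (2 ^ (k + 1))) +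
        qkron sigmaMinus (qkronPow (k + 1) sigmaPlus) +
        qkron sigmaPlus (qkronPow (k + 1) sigmaMinus)) ∧
    Tmat (2 ^ 1) = (-2 : ℝ) • (1 : Matrix (Fin 2) (Fin 2) ℝ) + sigmaMinus + sigmaPlus := by
  refine ⟨fun k => ?_, ?_⟩
  · ext p q
    obtain ⟨⟨a, i⟩, rfl⟩ := (qIdx (k + 1)).surjective p
    obtain ⟨⟨b, j⟩, rfl⟩ := (qIdx (k + 1)).surjective q
    simp only [Matrix.add_apply, qkron_apply, qkronPow_sigmaPlus_apply, qkronPow_sigmaMinus_apply,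
      sigmaPlus_apply, sigmaMinus_apply, one_apply]
    fin_cases a <;> fin_cases b <;> simp [Tmat_qIdx_same, Tmat_qIdx_zero_one, Tmat_qIdx_one_zero]
  · ext i j
    fin_cases i <;> fin_cases j <;>
      simp [Tmat_apply, sigmaPlus_apply, sigmaMinus_apply, one_apply]
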